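/- Let G be a finite group acting on a set X, and acting on a real normed vector space Y by linear maps. For f : X → Y let f̄(x) = (1/|G|) ∑_{t ∈ G} t⁻¹ • f(t • x). Then the unnormalized equivariant loss vanishes everywhere, i.e., ∑_{t ∈ G} ‖f(t • x) − t • f̄(x)‖² = 0 for every x ∈ X, if and only if f is equivariant under G (f(t • x) = t • f(x) for all t ∈ G and x ∈ X). -/

import Mathlib

open Finset

/-- The equivariant average of `f : X → Y` over a finite group `G` acting on `X`
and acting by linear maps on the real normed vector space `Y`:
`f̄ x = (1/|G|) ∑ t, t⁻¹ • f (t • x)`. -/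
noncomputable def equivariantAverage (G : Type*) {X Y : Type*} [Group G] [Fintype G]
    [MulAction G X] [NormedAddCommGroup Y] [NormedSpace ℝ Y] [DistribMulAction G Y]
    (f : X → Y) (x : X) : Y :=
  (Fintype.card G : ℝ)⁻¹ • ∑ t : G, t⁻¹ • f (t • x)

/-- The unnormalized equivariant loss
`∑ t, ‖f (t • x) − t • f̄ x‖²` vanishes at every `x ∈ X` if and only if
`f` is equivariant under `G`. -/
theorem unnormalized_eqLoss_eq_zero_iff_equivariant {G X Y : Type*} [Group G] [Fintype G]
    [MulAction G X] [NormedAddCommGroup Y] [NormedSpace ℝ Y] [DistribMulAction G Y]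
    [SMulCommClass G ℝ Y]
    (f : X → Y) :
    (∀ x : X, ∑ t : G, ‖f (t • x) - t • equivariantAverage G f x‖ ^ 2 = 0) ↔
      (∀ (t : G) (x : X), f (t • x) = t • f x) := by
  constructor
  · intro h t x
    have key : ∀ (s : G), f (s • x) = s • equivariantAverage G f x := by
      intro s
      have hz := (Finset.sum_eq_zero_iff_of_nonneg
        (fun t _ => by positivity)).mp (h x) s (mem_univ s)
      have : ‖f (s • x) - s • equivariantAverage G f x‖ = 0 := by
        nlinarith [norm_nonneg (f (s • x) - s • equivariantAverage G f x)]
      exact sub_eq_zero.mp (norm_eq_zero.mp this)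
    have h1 : f x = equivariantAverage G f x := by
      have := key 1
      simpa using this
    rw [key t, ← h1]
  · intro h x
    have havg : equivariantAverage G f x = f x := by
      unfold equivariantAverage
      have : ∀ t : G, t⁻¹ • f (t • x) = f x := by
        intro t
        rw [h t x, inv_smul_smul]
      rw [Finset.sum_congr rfl fun t _ => this t, Finset.sum_const, card_univ]
      have hc : (Fintype.card G : ℝ) ≠ 0 := by
        exact_mod_cast Fintype.card_ne_zero
      rw [← Nat.cast_smul_eq_nsmul ℝ, inv_smul_smul₀ hc]
    apply Finset.sum_eq_zero
    intro t _
    rw [havg, h t x, sub_self, norm_zero]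
    norm_num
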